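/- Let G and G' be finite abelian groups, with G a p-group for some prime p. Then w(G) = w(G') if and only if exp(G) = exp(G') and k(G) = k(G'). -/

import Mathlib

open Multiset Pointwise

/-- Cross number of a sequence (multiset) over an additive group. -/
noncomputable def crossNum {G : Type*} [AddCommGroup G] (S : Multiset G) : ℚ :=
  (S.map (fun g => (1 : ℚ) / (addOrderOf g : ℚ))).sum

/-- A sequence is zero-sum free if no non-empty subsequence sums to zero. -/
def IsZeroSumFree {G : Type*} [AddCommGroup G] (S : Multiset G) : Prop :=
  ∀ T : Multiset G, T ≤ S → T ≠ 0 → T.sum ≠ (0 : G)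

/-- A minimal zero-sum sequence: non-trivial, sum zero, no proper non-trivial
zero-sum subsequence. -/
def IsMinZeroSum {G : Type*} [AddCommGroup G] (S : Multiset G) : Prop :=
  S ≠ 0 ∧ S.sum = 0 ∧ ∀ T : Multiset G, T < S → T ≠ 0 → T.sum ≠ (0 : G)

/-- `wSet G` : set of cross numbers of non-trivial zero-sum free sequences over `G`. -/
def wSet (G : Type*) [AddCommGroup G] : Set ℚ :=
  { k | ∃ S : Multiset G, S ≠ 0 ∧ IsZeroSumFree S ∧ crossNum S = k }

/-- `WSet G` : set of cross numbers of minimal zero-sum sequences over `G`. -/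
def WSet (G : Type*) [AddCommGroup G] : Set ℚ :=
  { k | ∃ S : Multiset G, IsMinZeroSum S ∧ crossNum S = k }

section Aux

variable {H : Type*} [AddCommGroup H]

lemma crossNum_add (S T : Multiset H) : crossNum (S + T) = crossNum S + crossNum T := by
  simp [crossNum]

lemma crossNum_cons (g : H) (S : Multiset H) :
    crossNum (g ::ₘ S) = 1 / (addOrderOf g : ℚ) + crossNum S := by
  simp [crossNum]

lemma crossNum_replicate (k : ℕ) (g : H) :
    crossNum (Multiset.replicate k g) = (k : ℚ) / (addOrderOf g : ℚ) := by
  simp [crossNum, Multiset.map_replicate, Multiset.sum_replicate, nsmul_eq_mul, div_eq_mul_inv]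

lemma IsZeroSumFree.mono {S T : Multiset H} (h : IsZeroSumFree S) (hle : T ≤ S) :
    IsZeroSumFree T := fun U hU => h U (hU.trans hle)

lemma IsZeroSumFree.ne_zero_of_mem {S : Multiset H} (h : IsZeroSumFree S) {g : H}
    (hg : g ∈ S) : g ≠ 0 := by
  intro h0
  exact h {g} (Multiset.singleton_le.mpr hg) (by simp) (by simp [h0])

end Aux

section Aux2

variable {H : Type*} [AddCommGroup H] [Fintype H]

lemma exists_crossNum_nat {S : Multiset H} (hS : S ≠ 0) :
    ∃ n : ℕ, 0 < n ∧ crossNum S = (n : ℚ) / (AddMonoid.exponent H : ℚ) := by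
  have hepos : 0 < AddMonoid.exponent H :=
    Nat.pos_of_ne_zero AddMonoid.exponent_ne_zero_of_finite
  have he : ((AddMonoid.exponent H : ℕ) : ℚ) ≠ 0 := by exact_mod_cast hepos.ne'
  classical
  refine ⟨(S.map (fun g => AddMonoid.exponent H / addOrderOf g)).sum, ?_, ?_⟩
  · obtain ⟨g, hg⟩ := Multiset.exists_mem_of_ne_zero hS
    have : S = g ::ₘ S.erase g := (Multiset.cons_erase hg).symm
    rw [this, Multiset.map_cons, Multiset.sum_cons]
    have h1 : 0 < AddMonoid.exponent H / addOrderOf g :=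
      Nat.div_pos (Nat.le_of_dvd hepos (AddMonoid.addOrder_dvd_exponent g)) (addOrderOf_pos g)
    omega
  · clear hS
    induction S using Multiset.induction with
    | empty => simp [crossNum]
    | cons g S ih =>
      rw [Multiset.map_cons, Multiset.sum_cons, crossNum_cons, ih]
      have hd : addOrderOf g ∣ AddMonoid.exponent H := AddMonoid.addOrder_dvd_exponent g
      have ho : ((addOrderOf g : ℕ) : ℚ) ≠ 0 := by exact_mod_cast (addOrderOf_pos g).ne'
      push_cast [Nat.cast_div hd ho]
      field_simp

lemma nsmul_sum_eq_zero {S : Multiset H} {d : ℕ} (h : ∀ g ∈ S, addOrderOf g ∣ d) :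
    d • S.sum = 0 := by
  induction S using Multiset.induction with
  | empty => simp
  | cons g S ih =>
    rw [Multiset.sum_cons, nsmul_add]
    rw [addOrderOf_dvd_iff_nsmul_eq_zero.mp (h g (Multiset.mem_cons_self g S)),
      ih (fun x hx => h x (Multiset.mem_cons_of_mem hx)), add_zero]

end Aux2

/-- Digit sequence over `h` : `(p-1)` copies of `p^i • h` for each `i < m`. -/
def Vseq {H : Type*} [AddCommGroup H] (p : ℕ) (h : H) (m : ℕ) : Multiset H :=
  (Multiset.range m).bind fun i => Multiset.replicate (p - 1) ((p ^ i) • h)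

section Vlemmas

variable {H : Type*} [AddCommGroup H] {p c : ℕ} (hp : p.Prime) {h : H}
  (hh : addOrderOf h = p ^ c)

include hp hh in
lemma addOrderOf_pow_smul {i : ℕ} (hi : i ≤ c) : addOrderOf ((p ^ i) • h) = p ^ (c - i) := by
  rw [addOrderOf_nsmul' h (pow_ne_zero i hp.ne_zero), hh,
    Nat.gcd_eq_right (pow_dvd_pow p hi), Nat.pow_div hi hp.pos]

include hp hh in
lemma crossNum_Vseq {m : ℕ} (hm : m ≤ c) :
    crossNum (Vseq p h m) = ((p : ℚ) ^ m - 1) / (p : ℚ) ^ c := by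
  induction m with
  | zero => simp [Vseq, crossNum]
  | succ m ih =>
    rw [Vseq, Multiset.range_succ, Multiset.cons_bind, crossNum_add]
    rw [show ((Multiset.range m).bind fun i => Multiset.replicate (p - 1) ((p ^ i) • h))
        = Vseq p h m from rfl, ih (le_of_lt (Nat.lt_of_succ_le hm)) ]
    rw [crossNum_replicate, addOrderOf_pow_smul hp hh (le_of_lt (Nat.lt_of_succ_le hm))]
    have h1 : ((p ^ (c - m) : ℕ) : ℚ) = (p : ℚ) ^ (c - m) := by push_cast; ring
    have h2 : (p : ℚ) ^ (c - m) * (p : ℚ) ^ m = (p : ℚ) ^ c := by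
      rw [← pow_add]
      congr 1
      omega
    have hppos : (0:ℚ) < (p:ℚ) := by exact_mod_cast hp.pos
    have h3 : ((p - 1 : ℕ) : ℚ) = (p : ℚ) - 1 := by
      have := hp.one_le
      push_cast [this]
      ring
    rw [h1, h3]
    have hc0 : (p : ℚ) ^ c ≠ 0 := by positivity
    have hcm0 : (p : ℚ) ^ (c - m) ≠ 0 := by positivity
    have h4 : ((p:ℚ) - 1) / (p:ℚ)^(c-m) = (((p:ℚ) - 1) * (p:ℚ)^m) / ((p:ℚ)^c) := by
      rw [div_eq_div_iff hcm0 hc0]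
      linear_combination (1 - (p:ℚ)) * h2
    rw [h4, ← add_div]
    congr 1
    rw [pow_succ]
    ring

end Vlemmas

section Vlemmas2

variable {H : Type*} [AddCommGroup H] {p : ℕ} (hp : p.Prime) {h : H}

include hp in
lemma Vseq_ne_zero {m : ℕ} (hm : 1 ≤ m) : Vseq p h m ≠ 0 := by
  have hp2 := hp.two_le
  intro h0
  have : (p ^ 0) • h ∈ Vseq p h m := by
    refine Multiset.mem_bind.mpr ⟨0, Multiset.mem_range.mpr hm, ?_⟩
    exact Multiset.mem_replicate.mpr ⟨by omega, rfl⟩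
  rw [h0] at this
  exact Multiset.notMem_zero _ this

include hp in
lemma Vseq_subsum {m : ℕ} :
    ∀ W ≤ Vseq p h m, W ≠ 0 → ∃ α : ℕ, 0 < α ∧ α < p ^ m ∧ W.sum = α • h := by
  classical
  induction m with
  | zero =>
    intro W hW hW0
    simp [Vseq] at hW
    exact absurd hW hW0
  | succ m ih =>
    intro W hW hW0
    rw [Vseq, Multiset.range_succ, Multiset.cons_bind] at hW
    set V := Vseq p h m with hV
    set C := Multiset.replicate (p - 1) ((p ^ m) • h) with hC
    have hU : W - V ≤ C := Multiset.sub_le_iff_le_add.mpr hW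
    have hW2 : W ∩ V ≤ V := Multiset.inter_le_right
    obtain ⟨j, hj, hUrep⟩ := Multiset.le_replicate_iff.mp hU
    have hsum : (W - V).sum + (W ∩ V).sum = W.sum := by
      rw [← Multiset.sum_add, Multiset.sub_add_inter]
    have hUsum : (W - V).sum = (j * p ^ m) • h := by
      rw [hUrep, Multiset.sum_replicate, smul_smul]
    by_cases h2 : W ∩ V = 0
    · have hWU : W - V = W := by
        have := Multiset.sub_add_inter W V
        rwa [h2, add_zero] at this
      have hj1 : 1 ≤ j := by
        rcases Nat.eq_zero_or_pos j with rfl | hj1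
        · exfalso
          apply hW0
          rw [← hWU, hUrep]
          simp
        · exact hj1
      refine ⟨j * p ^ m, ?_, ?_, ?_⟩
      · exact Nat.mul_pos hj1 (pow_pos hp.pos m)
      · have : j < p := by omega
        calc j * p ^ m < p * p ^ m := by
              have hpm : 0 < p ^ m := pow_pos hp.pos m
              exact (Nat.mul_lt_mul_right hpm).mpr this
          _ = p ^ (m + 1) := by rw [pow_succ]; ring
      · rw [← hWU, hUsum]
    · obtain ⟨α2, hα2pos, hα2lt, hα2sum⟩ := ih (W ∩ V) hW2 h2
      refine ⟨j * p ^ m + α2, Nat.add_pos_right _ hα2pos, ?_, ?_⟩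
      · have hp2 := hp.two_le
        have hjp : j + 1 ≤ p := by omega
        calc j * p ^ m + α2 < j * p ^ m + p ^ m := Nat.add_lt_add_left hα2lt _
          _ = (j + 1) * p ^ m := by ring
          _ ≤ p * p ^ m := Nat.mul_le_mul_right _ hjp
          _ = p ^ (m + 1) := by rw [pow_succ]; ring
      · rw [← hsum, hUsum, hα2sum, add_nsmul]

end Vlemmas2

section Step

variable {H : Type*} [AddCommGroup H] [Fintype H]

lemma step_down {p c : ℕ} (hp : p.Prime) (he : AddMonoid.exponent H = p ^ c)
    {n : ℕ} (hn : 2 ≤ n) (hmem : ((n : ℚ) / (p : ℚ) ^ c) ∈ wSet H) :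
    (((n - 1 : ℕ) : ℚ) / (p : ℚ) ^ c) ∈ wSet H := by
  classical
  obtain ⟨S, hS0, hzsf, hcross⟩ := hmem
  have hppos : (0:ℚ) < (p:ℚ) := by exact_mod_cast hp.pos
  have hn1 : ((n - 1 : ℕ) : ℚ) = (n:ℚ) - 1 := by
    have h1n : (1:ℕ) ≤ n := by omega
    push_cast [h1n]
    ring
  obtain ⟨g, hgS, hgmax⟩ := S.toFinset.exists_max_image addOrderOf
    (by rwa [Multiset.toFinset_nonempty])
  rw [Multiset.mem_toFinset] at hgS
  have horder : ∀ x ∈ S, addOrderOf x ∣ p ^ c := fun x _ => by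
    rw [← he]; exact AddMonoid.addOrder_dvd_exponent x
  obtain ⟨a, hac, hga⟩ := (Nat.dvd_prime_pow hp).mp (horder g hgS)
  have hdvd_pa : ∀ x ∈ S, addOrderOf x ∣ p ^ a := by
    intro x hx
    obtain ⟨b, hbc, hxb⟩ := (Nat.dvd_prime_pow hp).mp (horder x hx)
    have hle : p ^ b ≤ p ^ a := by
      rw [← hxb, ← hga]
      exact hgmax x (Multiset.mem_toFinset.mpr hx)
    have hba : b ≤ a := (Nat.pow_le_pow_iff_right hp.one_lt).mp hle
    rw [hxb]; exact pow_dvd_pow p hba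
  set T := S.erase g with hT
  have hTS : T ≤ S := Multiset.erase_le g S
  have hST : S = g ::ₘ T := (Multiset.cons_erase hgS).symm
  have hcrossS : crossNum S = 1 / ((p:ℚ)^a) + crossNum T := by
    rw [hST, crossNum_cons, hga]
    push_cast
    ring
  have hcrossT : crossNum T = (n : ℚ) / (p:ℚ)^c - 1 / ((p:ℚ)^a) := by
    rw [hcross] at hcrossS
    linarith
  rcases eq_or_lt_of_le hac with rfl | hlt
  · -- the maximal order is p ^ c = exponent
    refine ⟨T, ?_, hzsf.mono hTS, ?_⟩
    · intro h0
      rw [h0] at hcrossT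
      simp only [crossNum, Multiset.map_zero, Multiset.sum_zero] at hcrossT
      have hpa0 : ((p:ℚ)^a) ≠ 0 := by positivity
      have : (n:ℚ) = 1 := by
        field_simp at hcrossT
        linarith
      have : n = 1 := by exact_mod_cast this
      omega
    · rw [hcrossT, hn1]
      ring
  · -- the maximal order is < exponent : compensate with a digit sequence
    obtain ⟨h, hh⟩ :=
      AddMonoid.exists_addOrderOf_eq_exponent (AddMonoid.ExponentExists.of_finite (G := H))
    rw [he] at hh
    set m := c - a with hm
    have hm1 : 1 ≤ m := by omega
    have hmc : m ≤ c := by omega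
    refine ⟨T + Vseq p h m, ?_, ?_, ?_⟩
    · intro h0
      exact Vseq_ne_zero hp hm1 (Multiset.le_zero.mp (h0 ▸ (Multiset.le_add_left _ _)))
    · intro W hW hW0 hWsum
      set V := Vseq p h m with hV
      have hU : W - V ≤ T := Multiset.sub_le_iff_le_add.mpr hW
      have hWV : W ∩ V ≤ V := Multiset.inter_le_right
      have hsum2 : (W - V).sum + (W ∩ V).sum = W.sum := by
        rw [← Multiset.sum_add, Multiset.sub_add_inter]
      by_cases h2 : W ∩ V = 0
      · have hWU : W - V = W := by
          have h3 := Multiset.sub_add_inter W V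
          rwa [h2, add_zero] at h3
        exact hzsf W ((hWU ▸ hU).trans hTS) hW0 hWsum
      · obtain ⟨α, hαpos, hαlt, hαsum⟩ := Vseq_subsum hp (W ∩ V) hWV h2
        have hUkill : (p ^ a) • (W - V).sum = 0 :=
          nsmul_sum_eq_zero (fun x hx =>
            hdvd_pa x (Multiset.mem_of_le hTS (Multiset.mem_of_le hU hx)))
        have hkill2 : (p ^ a) • ((W ∩ V).sum) = 0 := by
          have h4 := congrArg (fun z => (p ^ a) • z) hsum2
          simp only [hWsum, smul_zero, nsmul_add] at h4
          rw [hUkill, zero_add] at h4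
          exact h4
        rw [hαsum, smul_smul] at hkill2
        have hdvd : p ^ c ∣ p ^ a * α := by
          rw [← hh]; exact addOrderOf_dvd_iff_nsmul_eq_zero.mpr hkill2
        have hlt2 : p ^ a * α < p ^ c := by
          calc p ^ a * α < p ^ a * p ^ m :=
                mul_lt_mul_of_pos_left hαlt (pow_pos hp.pos a)
            _ = p ^ c := by rw [← pow_add]; congr 1; omega
        have h5 := Nat.le_of_dvd (Nat.mul_pos (pow_pos hp.pos a) hαpos) hdvd
        omega
    · rw [crossNum_add, hcrossT, crossNum_Vseq hp hh hmc, hn1]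
      have hec0 : ((p:ℚ)^c) ≠ 0 := by positivity
      have ha0 : ((p:ℚ)^a) ≠ 0 := by positivity
      have h2 : (p:ℚ)^a * (p:ℚ)^m = (p:ℚ)^c := by rw [← pow_add]; congr 1; omega
      have h4 : (1:ℚ) / (p:ℚ)^a = (p:ℚ)^m / (p:ℚ)^c := by
        rw [div_eq_div_iff ha0 hec0]
        linear_combination -h2
      rw [h4]
      ring

end Step

section Interval

variable {H : Type*} [AddCommGroup H] [Fintype H]

lemma exists_ne_zero_of_mem_wSet {x : ℚ} (hx : x ∈ wSet H) : ∃ g : H, g ≠ 0 := by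
  obtain ⟨S, hS0, hzsf, _⟩ := hx
  obtain ⟨g, hg⟩ := Multiset.exists_mem_of_ne_zero hS0
  exact ⟨g, hzsf.ne_zero_of_mem hg⟩

lemma wSet_eq_interval {p c : ℕ} (hp : p.Prime) (he : AddMonoid.exponent H = p ^ c)
    {kH : ℚ} (hk : IsGreatest (wSet H) kH) :
    wSet H = {x : ℚ | ∃ n : ℕ, 0 < n ∧ (n : ℚ) ≤ (p:ℚ)^c * kH ∧ x = (n:ℚ)/(p:ℚ)^c} := by
  have hppos : (0:ℚ) < (p:ℚ)^c := by
    have : (0:ℚ) < (p:ℚ) := by exact_mod_cast hp.pos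
    positivity
  have hecast : ((AddMonoid.exponent H : ℕ) : ℚ) = (p:ℚ)^c := by rw [he]; push_cast; ring
  have hmax : ∃ n₀ : ℕ, 0 < n₀ ∧ kH = (n₀ : ℚ) / (p:ℚ)^c := by
    obtain ⟨S, hS0, hzsf, hcr⟩ := hk.1
    obtain ⟨n₀, hpos, hcr2⟩ := exists_crossNum_nat hS0
    exact ⟨n₀, hpos, by rw [← hcr, hcr2, hecast]⟩
  obtain ⟨n₀, hn₀pos, hkHeq⟩ := hmax
  ext x
  constructor
  · rintro ⟨S, hS0, hzsf, rfl⟩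
    obtain ⟨n, hpos, hcr⟩ := exists_crossNum_nat hS0
    refine ⟨n, hpos, ?_, by rw [hcr, hecast]⟩
    have hle : crossNum S ≤ kH := hk.2 ⟨S, hS0, hzsf, rfl⟩
    rw [hcr, hecast, div_le_iff₀ hppos] at hle
    linarith
  · rintro ⟨n, hpos, hle, rfl⟩
    have hnn₀ : n ≤ n₀ := by
      have hq : (n:ℚ) ≤ (n₀ : ℚ) := by
        rw [hkHeq] at hle
        calc (n:ℚ) ≤ (p:ℚ)^c * ((n₀:ℚ)/(p:ℚ)^c) := hle
          _ = (n₀:ℚ) := by field_simp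
      exact_mod_cast hq
    have key : ∀ j : ℕ, ∀ nn : ℕ, nn + j = n₀ → 0 < nn → ((nn:ℚ)/(p:ℚ)^c) ∈ wSet H := by
      intro j
      induction j with
      | zero =>
        intro nn hnn _
        have : nn = n₀ := by omega
        subst this
        rw [← hkHeq]
        exact hk.1
      | succ j ih =>
        intro nn hnn hnnpos
        have h1 : (((nn+1 : ℕ)):ℚ)/(p:ℚ)^c ∈ wSet H := ih (nn+1) (by omega) (by omega)
        have h2 := step_down hp he (n := nn + 1) (by omega) h1
        simpa using h2
    exact key (n₀ - n) n (by omega) hpos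

lemma isLeast_wSet (hnt : ∃ g : H, g ≠ 0) :
    IsLeast (wSet H) (1 / (AddMonoid.exponent H : ℚ)) := by
  have hepos : 0 < AddMonoid.exponent H :=
    Nat.pos_of_ne_zero AddMonoid.exponent_ne_zero_of_finite
  have hE : (0:ℚ) < ((AddMonoid.exponent H : ℕ) : ℚ) := by exact_mod_cast hepos
  constructor
  · obtain ⟨h, hh⟩ :=
      AddMonoid.exists_addOrderOf_eq_exponent (AddMonoid.ExponentExists.of_finite (G := H))
    have hne : h ≠ 0 := by
      intro h0
      obtain ⟨g, hg⟩ := hnt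
      have h1 : AddMonoid.exponent H = 1 := by rw [← hh, h0, addOrderOf_zero]
      have h2 : addOrderOf g ∣ 1 := h1 ▸ AddMonoid.addOrder_dvd_exponent g
      exact hg (AddMonoid.addOrderOf_eq_one_iff.mp (Nat.eq_one_of_dvd_one h2))
    refine ⟨{h}, by simp, ?_, by simp [crossNum, hh]⟩
    intro U hU hU0
    rcases Multiset.le_singleton.mp hU with rfl | rfl
    · exact absurd rfl hU0
    · simpa using hne
  · rintro x ⟨S, hS0, hzsf, rfl⟩
    obtain ⟨n, hpos, hcr⟩ := exists_crossNum_nat hS0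
    rw [hcr]
    have h1 : (1:ℚ) ≤ (n:ℚ) := by exact_mod_cast hpos
    exact (div_le_div_iff_of_pos_right hE).mpr h1

end Interval

theorem stmt14 (G G' : Type*) [AddCommGroup G] [AddCommGroup G']
    [Fintype G] [Fintype G']
    (p : ℕ) (hp : p.Prime) (hG : ∃ m : ℕ, Fintype.card G = p ^ m)
    (kG kG' : ℚ) (hkG : IsGreatest (wSet G) kG) (hkG' : IsGreatest (wSet G') kG') :
    wSet G = wSet G' ↔
      (AddMonoid.exponent G = AddMonoid.exponent G' ∧ kG = kG') := by
  obtain ⟨mm, hcard⟩ := hG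
  have hntG : ∃ g : G, g ≠ 0 := exists_ne_zero_of_mem_wSet hkG.1
  have hntG' : ∃ g : G', g ≠ 0 := exists_ne_zero_of_mem_wSet hkG'.1
  have hd : AddMonoid.exponent G ∣ p ^ mm := by
    rw [← hcard]; exact AddGroup.exponent_dvd_card
  obtain ⟨c, hcm, he⟩ := (Nat.dvd_prime_pow hp).mp hd
  constructor
  · intro hEq
    constructor
    · have h1 := isLeast_wSet (H := G) hntG
      have h2 := isLeast_wSet (H := G') hntG'
      rw [hEq] at h1
      have h3 : 1 / ((AddMonoid.exponent G : ℕ):ℚ) = 1 / ((AddMonoid.exponent G' : ℕ):ℚ) :=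
        h1.unique h2
      have hpos1 : (0:ℚ) < ((AddMonoid.exponent G : ℕ):ℚ) := by
        exact_mod_cast Nat.pos_of_ne_zero (AddMonoid.exponent_ne_zero_of_finite (G := G))
      have hpos2 : (0:ℚ) < ((AddMonoid.exponent G' : ℕ):ℚ) := by
        exact_mod_cast Nat.pos_of_ne_zero (AddMonoid.exponent_ne_zero_of_finite (G := G'))
      have h4 : ((AddMonoid.exponent G : ℕ):ℚ) = ((AddMonoid.exponent G' : ℕ):ℚ) := by
        rw [div_eq_div_iff hpos1.ne' hpos2.ne'] at h3
        linarith
      exact_mod_cast h4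
    · rw [hEq] at hkG
      exact hkG.unique hkG'
  · rintro ⟨hexp, hkk⟩
    have he' : AddMonoid.exponent G' = p ^ c := by rw [← hexp, he]
    rw [wSet_eq_interval hp he hkG, wSet_eq_interval hp he' hkG', hkk]
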